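/- arXiv:1204.3072 — 2 statements merged into one kernel-verified Lean document; each statement's English description precedes it below -/
import Mathlib

section
/- Let H, H' be real Hilbert spaces, L : H → H' bounded linear, S₀ ∈ H', and for ε > 0 let v_ε minimize J_ε(v) = ‖v‖²_H + (1/ε)‖S₀ + L v‖²_{H'}. Suppose there exists M > 0 such that for all p ∈ H', |⟨S₀, p⟩| ≤ M ‖L* p‖_H (an observability inequality). Then ‖v_ε‖_H ≤ M and ‖S₀ + L v_ε‖²_{H'} ≤ ε M² for every ε > 0. -/
open scoped RealInnerProductSpace

lemma quad_coeff_zero (A B : ℝ) (hA : 0 ≤ A) (h : ∀ t : ℝ, 0 ≤ A * t ^ 2 + B * t) :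
    B = 0 := by
  by_contra hB
  have hc : (0:ℝ) < 1 / (A + 1) := by positivity
  have := h (-B * (1 / (A + 1)))
  have hlt : A * (-B * (1 / (A + 1))) ^ 2 + B * (-B * (1 / (A + 1))) < 0 := by
    have hB2 : 0 < B ^ 2 := by positivity
    have key : A * (-B * (1 / (A + 1))) ^ 2 + B * (-B * (1 / (A + 1)))
        = B ^ 2 * (1 / (A + 1)) * (A * (1 / (A + 1)) - 1) := by ring
    rw [key]
    have h1 : A * (1 / (A + 1)) - 1 < 0 := by
      have : A * (1 / (A + 1)) < 1 := by
        rw [mul_one_div, div_lt_one (by linarith)]; linarith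
      linarith
    have h2 : 0 < B ^ 2 * (1 / (A + 1)) := by positivity
    exact mul_neg_of_pos_of_neg h2 h1
  linarith

/-- If the observability inequality |⟨S₀,p⟩| ≤ M‖L*p‖ holds, then the minimizer v_ε
of J_ε(v) = ‖v‖² + (1/ε)‖S₀ + Lv‖² satisfies ‖v_ε‖ ≤ M and ‖S₀ + Lv_ε‖² ≤ εM². -/
theorem stmt_6 (H H' : Type*)
    [NormedAddCommGroup H] [InnerProductSpace ℝ H] [CompleteSpace H]
    [NormedAddCommGroup H'] [InnerProductSpace ℝ H'] [CompleteSpace H']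
    (L : H →L[ℝ] H') (S₀ : H') (M ε : ℝ) (hM : 0 < M) (hε : 0 < ε)
    (hobs : ∀ p : H', |⟪S₀, p⟫| ≤ M * ‖(ContinuousLinearMap.adjoint L) p‖)
    (v : H)
    (hmin : ∀ u : H,
      ‖v‖ ^ 2 + (1/ε) * ‖S₀ + L v‖ ^ 2 ≤ ‖u‖ ^ 2 + (1/ε) * ‖S₀ + L u‖ ^ 2) :
    ‖v‖ ≤ M ∧ ‖S₀ + L v‖ ^ 2 ≤ ε * M ^ 2 := by
  set p := S₀ + L v with hp
  -- Euler-Lagrange: for all w, ⟪v, w⟫ + (1/ε) ⟪p, L w⟫ = 0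
  have EL : ∀ w : H, ⟪v, w⟫ + (1/ε) * ⟪p, L w⟫ = 0 := by
    intro w
    set A := ‖w‖ ^ 2 + (1/ε) * ‖L w‖ ^ 2 with hA
    set B := 2 * (⟪v, w⟫ + (1/ε) * ⟪p, L w⟫) with hB
    have hApos : 0 ≤ A := by positivity
    have hq : ∀ t : ℝ, 0 ≤ A * t ^ 2 + B * t := by
      intro t
      have h1 := hmin (v + t • w)
      have e1 : ‖v + t • w‖ ^ 2 = ‖v‖ ^ 2 + 2 * (t * ⟪v, w⟫) + t ^ 2 * ‖w‖ ^ 2 := by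
        rw [norm_add_sq_real, real_inner_smul_right, norm_smul]
        simp [mul_pow]
      have e2 : ‖S₀ + L (v + t • w)‖ ^ 2
          = ‖p‖ ^ 2 + 2 * (t * ⟪p, L w⟫) + t ^ 2 * ‖L w‖ ^ 2 := by
        have : S₀ + L (v + t • w) = p + t • (L w) := by
          simp [hp, map_add, map_smul]; abel
        rw [this, norm_add_sq_real, real_inner_smul_right, norm_smul]
        simp [mul_pow]
      rw [e1, e2] at h1
      have : A * t ^ 2 + B * t =
          (‖v‖ ^ 2 + 2 * (t * ⟪v, w⟫) + t ^ 2 * ‖w‖ ^ 2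
            + (1/ε) * (‖p‖ ^ 2 + 2 * (t * ⟪p, L w⟫) + t ^ 2 * ‖L w‖ ^ 2))
          - (‖v‖ ^ 2 + (1/ε) * ‖p‖ ^ 2) := by
        rw [hA, hB]; ring
      rw [this]
      linarith
    have := quad_coeff_zero A B hApos hq
    rw [hB] at this
    linarith
  -- hence ε v + L* p = 0
  have hadj : ∀ w : H, ⟪ε • v + (ContinuousLinearMap.adjoint L) p, w⟫ = 0 := by
    intro w
    rw [inner_add_left, real_inner_smul_left, ContinuousLinearMap.adjoint_inner_left]
    have := EL w
    have hne : ε ≠ 0 := ne_of_gt hε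
    field_simp at this ⊢
    linarith
  have hzero : ε • v + (ContinuousLinearMap.adjoint L) p = 0 := by
    have := hadj (ε • v + (ContinuousLinearMap.adjoint L) p)
    exact inner_self_eq_zero.mp this
  have hLp : (ContinuousLinearMap.adjoint L) p = -(ε • v) := by
    linear_combination (norm := abel) hzero
  -- key identity: ⟪S₀, p⟫ = ‖p‖² + ε ‖v‖²
  have hid : ⟪S₀, p⟫ = ‖p‖ ^ 2 + ε * ‖v‖ ^ 2 := by
    have h1 : ⟪S₀, p⟫ = ⟪p, p⟫ - ⟪L v, p⟫ := by
      have : S₀ = p - L v := by rw [hp]; abel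
      rw [this, inner_sub_left]
    have h2 : ⟪L v, p⟫ = ⟪v, (ContinuousLinearMap.adjoint L) p⟫ := by
      rw [ContinuousLinearMap.adjoint_inner_right]
    rw [h1, h2, hLp, real_inner_self_eq_norm_sq]
    rw [inner_neg_right, real_inner_smul_right, real_inner_self_eq_norm_sq]
    ring
  have hbound := hobs p
  rw [hid, hLp] at hbound
  have hnn : 0 ≤ ‖p‖ ^ 2 + ε * ‖v‖ ^ 2 := by positivity
  rw [abs_of_nonneg hnn] at hbound
  have hnorm : ‖-(ε • v)‖ = ε * ‖v‖ := by
    rw [norm_neg, norm_smul, Real.norm_eq_abs, abs_of_pos hε]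
  rw [hnorm] at hbound
  -- now: ‖p‖² + ε‖v‖² ≤ M * (ε * ‖v‖)
  have hvM : ‖v‖ ≤ M := by
    rcases eq_or_lt_of_le (norm_nonneg v) with h0 | h0
    · rw [← h0]; linarith
    · have hp2 : 0 ≤ ‖p‖ ^ 2 := by positivity
      nlinarith [mul_pos hε h0, mul_pos (mul_pos hε h0) h0]
  constructor
  · exact hvM
  · nlinarith [norm_nonneg v, sq_nonneg (‖v‖ - M)]
end

section
/- Under the hypotheses of the previous statement (observability |⟨S₀,p⟩| ≤ M‖L*p‖ for all p ∈ H'), any weak limit v of a subsequence of the minimizers v_ε as ε → 0 satisfies S₀ + L v = 0 and ‖v‖_H ≤ M; i.e., v is a 'null control' with norm at most the observability constant. -/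
set_option maxHeartbeats 800000


open scoped RealInnerProductSpace

/-- Under the observability inequality |⟨S₀,p⟩| ≤ M‖L*p‖, any weak limit w of (a
subsequence of) the minimizers v_ε of J_ε as ε → 0 satisfies S₀ + Lw = 0 and
‖w‖ ≤ M, i.e. w is a null control of norm at most the observability constant. -/
theorem stmt_7 (H H' : Type*)
    [NormedAddCommGroup H] [InnerProductSpace ℝ H] [CompleteSpace H]
    [NormedAddCommGroup H'] [InnerProductSpace ℝ H'] [CompleteSpace H']
    (L : H →L[ℝ] H') (S₀ : H') (M : ℝ) (hM : 0 < M)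
    (hobs : ∀ p : H', |⟪S₀, p⟫| ≤ M * ‖(ContinuousLinearMap.adjoint L) p‖)
    (ε : ℕ → ℝ) (hε : ∀ n, 0 < ε n)
    (hε0 : Filter.Tendsto ε Filter.atTop (nhds 0))
    (v : ℕ → H)
    (hmin : ∀ n, ∀ u : H,
      ‖v n‖ ^ 2 + (1 / ε n) * ‖S₀ + L (v n)‖ ^ 2
        ≤ ‖u‖ ^ 2 + (1 / ε n) * ‖S₀ + L u‖ ^ 2)
    (w : H)
    (hweak : ∀ h : H,
      Filter.Tendsto (fun n => ⟪v n, h⟫) Filter.atTop (nhds ⟪w, h⟫)) :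
    S₀ + L w = 0 ∧ ‖w‖ ≤ M := by
  -- Euler–Lagrange equation for the minimizer
  have hEL : ∀ n, ∀ h : H,
      ⟪v n, h⟫ + (1 / ε n) * ⟪S₀ + L (v n), L h⟫ = 0 := by
    intro n h
    have he : 0 < ε n := hε n
    have he' : 0 < 1 / ε n := by positivity
    set b : ℝ := ⟪v n, h⟫ + (1 / ε n) * ⟪S₀ + L (v n), L h⟫ with hb
    set a : ℝ := ‖h‖ ^ 2 + (1 / ε n) * ‖L h‖ ^ 2 with ha
    have ha0 : 0 ≤ a := by positivity
    have key : ∀ t : ℝ, 0 ≤ 2 * t * b + t ^ 2 * a := by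
      intro t
      have h1 : ‖v n + t • h‖ ^ 2
          = ‖v n‖ ^ 2 + 2 * (t * ⟪v n, h⟫) + t ^ 2 * ‖h‖ ^ 2 := by
        rw [norm_add_sq_real, real_inner_smul_right, norm_smul, mul_pow, Real.norm_eq_abs, sq_abs]
      have hL : S₀ + L (v n + t • h) = (S₀ + L (v n)) + t • L h := by
        rw [map_add, map_smul]; abel
      have h2 : ‖S₀ + L (v n + t • h)‖ ^ 2
          = ‖S₀ + L (v n)‖ ^ 2 + 2 * (t * ⟪S₀ + L (v n), L h⟫)
            + t ^ 2 * ‖L h‖ ^ 2 := by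
        rw [hL, norm_add_sq_real, real_inner_smul_right, norm_smul, mul_pow, Real.norm_eq_abs, sq_abs]
      have := hmin n (v n + t • h)
      rw [h1, h2] at this
      have : 0 ≤ 2 * (t * ⟪v n, h⟫) + t ^ 2 * ‖h‖ ^ 2
          + (1 / ε n) * (2 * (t * ⟪S₀ + L (v n), L h⟫) + t ^ 2 * ‖L h‖ ^ 2) := by
        nlinarith [this]
      rw [hb, ha]; nlinarith [this]
    -- conclude b = 0
    have ha1 : 0 < a + 1 := by linarith
    have hk := key (-b / (a + 1))
    have hb2 : b ^ 2 ≤ 0 := by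
      have hexp : 2 * (-b / (a + 1)) * b + (-b / (a + 1)) ^ 2 * a
          = b ^ 2 * (a - 2 * (a + 1)) / (a + 1) ^ 2 := by
        field_simp; ring
      rw [hexp] at hk
      have hneg : a - 2 * (a + 1) < 0 := by linarith
      have hp : (0:ℝ) < (a + 1) ^ 2 := by positivity
      rw [le_div_iff₀ hp, zero_mul] at hk
      nlinarith [hk, hneg]
    have : b = 0 := by nlinarith [sq_nonneg b]
    exact this
  -- the minimizer equals an adjoint image
  have hadj : ∀ n, (ContinuousLinearMap.adjoint L)
      ((-(1 / ε n)) • (S₀ + L (v n))) = v n := by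
    intro n
    apply ext_inner_right ℝ
    intro h
    rw [ContinuousLinearMap.adjoint_inner_left, real_inner_smul_left]
    have := hEL n h
    linarith [this]
  -- key bound
  have hbound : ∀ n, ‖v n‖ ^ 2 + (1 / ε n) * ‖S₀ + L (v n)‖ ^ 2 ≤ M * ‖v n‖ := by
    intro n
    have he : 0 < ε n := hε n
    have h1 := hEL n (v n)
    have h2 : ⟪S₀ + L (v n), L (v n)⟫
        = ‖S₀ + L (v n)‖ ^ 2 - ⟪S₀ + L (v n), S₀⟫ := by
      have : ⟪S₀ + L (v n), (S₀ + L (v n)) - S₀⟫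
          = ⟪S₀ + L (v n), S₀ + L (v n)⟫ - ⟪S₀ + L (v n), S₀⟫ := by
        rw [inner_sub_right]
      simpa [real_inner_self_eq_norm_sq] using this
    have h3 : ‖v n‖ ^ 2 + (1 / ε n) * ‖S₀ + L (v n)‖ ^ 2
        = (1 / ε n) * ⟪S₀ + L (v n), S₀⟫ := by
      rw [real_inner_self_eq_norm_sq] at h1
      rw [h2] at h1
      ring_nf at h1 ⊢
      linarith [h1]
    have h4 := hobs ((-(1 / ε n)) • (S₀ + L (v n)))
    rw [hadj n] at h4
    have h5 : ⟪S₀, (-(1 / ε n)) • (S₀ + L (v n))⟫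
        = -(1 / ε n) * ⟪S₀ + L (v n), S₀⟫ := by
      rw [real_inner_smul_right, real_inner_comm]
    rw [h5] at h4
    calc ‖v n‖ ^ 2 + (1 / ε n) * ‖S₀ + L (v n)‖ ^ 2
        = (1 / ε n) * ⟪S₀ + L (v n), S₀⟫ := h3
      _ ≤ |(-(1 / ε n)) * ⟪S₀ + L (v n), S₀⟫| := by
          rw [abs_mul, abs_neg]
          calc (1 / ε n) * ⟪S₀ + L (v n), S₀⟫
              ≤ |(1 / ε n) * ⟪S₀ + L (v n), S₀⟫| := le_abs_self _
            _ = |1 / ε n| * |⟪S₀ + L (v n), S₀⟫| := abs_mul _ _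
      _ ≤ M * ‖v n‖ := h4
  have hvM : ∀ n, ‖v n‖ ≤ M := by
    intro n
    have he : 0 < ε n := hε n
    have h1 := hbound n
    have h2 : 0 ≤ (1 / ε n) * ‖S₀ + L (v n)‖ ^ 2 := by positivity
    nlinarith [norm_nonneg (v n)]
  have hS : ∀ n, ‖S₀ + L (v n)‖ ^ 2 ≤ ε n * M ^ 2 := by
    intro n
    have he : 0 < ε n := hε n
    have h1 := hbound n
    have h2 := hvM n
    have h3 : M * ‖v n‖ ≤ M * M := by nlinarith [norm_nonneg (v n)]
    have h4 : (1 / ε n) * ‖S₀ + L (v n)‖ ^ 2 ≤ M ^ 2 := by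
      nlinarith [sq_nonneg (‖v n‖)]
    calc ‖S₀ + L (v n)‖ ^ 2 = ε n * ((1 / ε n) * ‖S₀ + L (v n)‖ ^ 2) := by
          field_simp
      _ ≤ ε n * M ^ 2 := by nlinarith
  -- strong convergence of S₀ + L v_n to 0
  have htend2 : Filter.Tendsto (fun n => ‖S₀ + L (v n)‖ ^ 2)
      Filter.atTop (nhds 0) := by
    have hub : Filter.Tendsto (fun n => ε n * M ^ 2) Filter.atTop (nhds 0) := by
      simpa using hε0.mul_const (M ^ 2)
    exact squeeze_zero (fun n => by positivity) hS hub
  have htend : Filter.Tendsto (fun n => ‖S₀ + L (v n)‖)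
      Filter.atTop (nhds 0) := by
    have h0 : Filter.Tendsto (fun n => Real.sqrt (‖S₀ + L (v n)‖ ^ 2))
        Filter.atTop (nhds 0) := by
      simpa [Function.comp_def] using (Real.continuous_sqrt.tendsto 0).comp htend2
    have heq : ∀ n, Real.sqrt (‖S₀ + L (v n)‖ ^ 2) = ‖S₀ + L (v n)‖ :=
      fun n => Real.sqrt_sq (norm_nonneg _)
    simpa only [heq] using h0
  constructor
  · -- S₀ + L w = 0
    have hq : ∀ q : H', ⟪S₀ + L w, q⟫ = 0 := by
      intro q
      have h1 : Filter.Tendsto (fun n => ⟪S₀ + L (v n), q⟫)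
          Filter.atTop (nhds ⟪S₀ + L w, q⟫) := by
        have heq : ∀ u : H, ⟪S₀ + L u, q⟫
            = ⟪S₀, q⟫ + ⟪u, (ContinuousLinearMap.adjoint L) q⟫ := by
          intro u
          rw [inner_add_left, ContinuousLinearMap.adjoint_inner_right]
        simp only [heq]
        exact (tendsto_const_nhds.add (hweak ((ContinuousLinearMap.adjoint L) q)))
      have h2 : Filter.Tendsto (fun n => ⟪S₀ + L (v n), q⟫)
          Filter.atTop (nhds 0) := by
        have hg : Filter.Tendsto (fun n => ‖S₀ + L (v n)‖ * ‖q‖)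
            Filter.atTop (nhds 0) := by simpa using htend.mul_const ‖q‖
        exact squeeze_zero_norm
          (fun n => by
            simpa [Real.norm_eq_abs] using abs_real_inner_le_norm (S₀ + L (v n)) q)
          hg
      exact tendsto_nhds_unique h1 h2
    have := hq (S₀ + L w)
    exact inner_self_eq_zero.mp this
  · -- ‖w‖ ≤ M
    have h1 : Filter.Tendsto (fun n => ⟪v n, w⟫) Filter.atTop (nhds ⟪w, w⟫) :=
      hweak w
    have h2 : ⟪w, w⟫ ≤ M * ‖w‖ := by
      apply le_of_tendsto h1
      filter_upwards with n
      calc ⟪v n, w⟫ ≤ ‖v n‖ * ‖w‖ := real_inner_le_norm _ _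
        _ ≤ M * ‖w‖ := by
            have := hvM n
            nlinarith [norm_nonneg w]
    rw [real_inner_self_eq_norm_sq] at h2
    nlinarith [norm_nonneg w]
end
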